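/- Let (X,d) be a metric space. Then (X,d) is complete if and only if the space (F_USCG(X), H_end) is complete, i.e., every sequence in F_USCG(X) that is Cauchy with respect to H_end converges in H_end to some element of F_USCG(X). -/

import Mathlib

open Set Filter Metric Topology MeasureTheory

/-- The α-cut of a fuzzy set `u : X → ℝ`: for `α ≠ 0` it is `{x | u x ≥ α}`,
and for `α = 0` it is the closure of `{x | u x > 0}`. -/
noncomputable def cut {X : Type*} [MetricSpace X] (u : X → ℝ) (α : ℝ) : Set X :=
  if α = 0 then closure {x | 0 < u x} else {x | α ≤ u x}

/-- `u` is a normal upper semicontinuous fuzzy set: it takes values in `[0,1]` and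
all α-cuts (`α ∈ [0,1]`) are nonempty and closed. -/
def FUSC {X : Type*} [MetricSpace X] (u : X → ℝ) : Prop :=
  (∀ x, u x ∈ Set.Icc (0:ℝ) 1) ∧
    ∀ α ∈ Set.Icc (0:ℝ) 1, (cut u α).Nonempty ∧ IsClosed (cut u α)

/-- `F_USCG(X)`: fuzzy sets in `F_USC(X)` with compact positive α-cuts. -/
def FUSCG {X : Type*} [MetricSpace X] (u : X → ℝ) : Prop :=
  FUSC u ∧ ∀ α ∈ Set.Ioc (0:ℝ) 1, IsCompact (cut u α)

/-- `F_USCB(X)`: fuzzy sets in `F_USC(X)` with compact support. -/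
def FUSCB {X : Type*} [MetricSpace X] (u : X → ℝ) : Prop :=
  FUSC u ∧ IsCompact (cut u 0)

/-- Kuratowski lower limit of a sequence of sets. -/
def kurLiminf {Y : Type*} [MetricSpace Y] (C : ℕ → Set Y) : Set Y :=
  {y | ∃ f : ℕ → Y, (∀ n, f n ∈ C n) ∧ Tendsto f atTop (𝓝 y)}

/-- Kuratowski upper limit of a sequence of sets. -/
def kurLimsup {Y : Type*} [MetricSpace Y] (C : ℕ → Set Y) : Set Y :=
  {y | ∃ φ : ℕ → ℕ, StrictMono φ ∧
        ∃ f : ℕ → Y, (∀ n, f n ∈ C (φ n)) ∧ Tendsto f atTop (𝓝 y)}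

/-- Kuratowski convergence of a sequence of sets to a set. -/
def KurConv {Y : Type*} [MetricSpace Y] (C : ℕ → Set Y) (D : Set Y) : Prop :=
  kurLiminf C = D ∧ kurLimsup C = D

/-- The endograph of `u`: `{(x,t) ∈ X × [0,1] : u x ≥ t}`. -/
def endo {X : Type*} [MetricSpace X] (u : X → ℝ) : Set (X × ℝ) :=
  {p | p.2 ∈ Set.Icc (0:ℝ) 1 ∧ p.2 ≤ u p.1}

/-- The sendograph of `u`: `end u ∩ ([u]₀ × [0,1])`. -/
noncomputable def sendo {X : Type*} [MetricSpace X] (u : X → ℝ) : Set (X × ℝ) :=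
  endo u ∩ (cut u 0) ×ˢ (Set.Icc (0:ℝ) 1)

/-- Γ-convergence: Kuratowski convergence of endographs. -/
def GammaConv {X : Type*} [MetricSpace X] (un : ℕ → X → ℝ) (u : X → ℝ) : Prop :=
  KurConv (fun n => endo (un n)) (endo u)

/-- The endograph metric. -/
noncomputable def Hend {X : Type*} [MetricSpace X] (u v : X → ℝ) : ℝ :=
  hausdorffDist (endo u) (endo v)

/-- The sendograph metric. -/
noncomputable def Hsend {X : Type*} [MetricSpace X] (u v : X → ℝ) : ℝ :=
  hausdorffDist (sendo u) (sendo v)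

/-- The set of platform points of `u`:
`α ∈ (0,1)` with `closure {u > α}` a proper subset of `[u]_α`. -/
def Pset {X : Type*} [MetricSpace X] (u : X → ℝ) : Set ℝ :=
  {α | α ∈ Set.Ioo (0:ℝ) 1 ∧ closure {x | α < u x} ⊂ cut u α}

/-- `P₀(u)`: the set of `α ∈ (0,1)` such that `H([u]_β, [u]_α)` does not tend to `0`
as `β → α`. -/
def P0set {X : Type*} [MetricSpace X] (u : X → ℝ) : Set ℝ :=
  {α | α ∈ Set.Ioo (0:ℝ) 1 ∧
    ¬ Tendsto (fun β => hausdorffDist (cut u β) (cut u α)) (𝓝[≠] α) (𝓝 0)}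

/-!
If `X` is complete, so is the space of closed subsets of `X × ℝ` with the Hausdorff distance.
The endographs of `[0,1]`-valued functions form a closed subset of it, so an `Hend`-Cauchy
sequence `s n` converges to the endograph of some `v`. Every positive cut `[v]_α` lies within
`δ` of the compact cut `[s N]_{α-δ}` for large `N`, hence is compact, and `[v]_1` is a nested
intersection of nonempty compact cuts. Conversely, `a ↦ pointIndicator a` does not increase
distances, and a point of level `1` of an `Hend`-limit of `pointIndicator (x n)` is a limit
of `x n`.
-/

open TopologicalSpace
open scoped ENNReal

section FuzzySets

variable {X : Type*} [MetricSpace X] {u v : X → ℝ}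

lemma cut_of_ne_zero (u : X → ℝ) {α : ℝ} (hα : α ≠ 0) : cut u α = {x | α ≤ u x} := if_neg hα

lemma mem_cut_iff_mem_endo {α : ℝ} (hα : α ∈ Ioc (0:ℝ) 1) {x : X} :
    x ∈ cut u α ↔ (x, α) ∈ endo u := by
  rw [cut_of_ne_zero u hα.1.ne']
  exact ⟨fun h => ⟨Ioc_subset_Icc_self hα, h⟩, And.right⟩

lemma cut_subset_cut {α β : ℝ} (hα : 0 < α) (hαβ : α ≤ β) : cut u β ⊆ cut u α := by
  rw [cut_of_ne_zero u hα.ne', cut_of_ne_zero u (hα.trans_le hαβ).ne']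
  exact fun x hx => hαβ.trans hx

lemma isClosed_cut_of_isClosed_endo (hu : IsClosed (endo u)) {α : ℝ} (hα : α ∈ Ioc (0:ℝ) 1) :
    IsClosed (cut u α) := by
  have hcut : cut u α = (fun x => (x, α)) ⁻¹' endo u := ext fun x => mem_cut_iff_mem_endo hα
  exact hcut ▸ hu.preimage (Continuous.prodMk_left α)

lemma FUSC.upperSemicontinuous (hu : FUSC u) : UpperSemicontinuous u := by
  refine upperSemicontinuous_iff_isClosed_preimage.2 fun α => ?_
  rcases le_or_gt α 0 with hα0 | hα0
  · convert isClosed_univ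
    exact eq_univ_of_forall fun x => hα0.trans (hu.1 x).1
  rcases le_or_gt α 1 with hα1 | hα1
  · have hcl := (hu.2 α ⟨hα0.le, hα1⟩).2
    rw [cut_of_ne_zero u hα0.ne'] at hcl
    exact hcl
  · convert isClosed_empty
    exact eq_empty_of_forall_notMem fun x hx => (hu.1 x).2.not_gt (hα1.trans_le hx)

lemma FUSC.isClosed_endo (hu : FUSC u) : IsClosed (endo u) :=
  (isClosed_Icc.preimage continuous_snd).inter hu.upperSemicontinuous.IsClosed_hypograph

lemma cut_one_nonempty (hcpt : ∀ α ∈ Ioo (0:ℝ) 1, IsCompact (cut u α))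
    (hne : ∀ α ∈ Ioo (0:ℝ) 1, (cut u α).Nonempty) : (cut u 1).Nonempty := by
  have hdir : Directed (· ⊇ ·) fun α : Ioo (0:ℝ) 1 => cut u α := fun a b =>
    ⟨⟨max a b, lt_max_of_lt_left a.2.1, max_lt a.2.2 b.2.2⟩,
      cut_subset_cut a.2.1 (le_max_left _ _), cut_subset_cut b.2.1 (le_max_right _ _)⟩
  have : Nonempty (Ioo (0:ℝ) 1) := ⟨⟨1 / 2, by norm_num, by norm_num⟩⟩
  obtain ⟨x, hx⟩ := IsCompact.nonempty_iInter_of_directed_nonempty_isCompact_isClosed _ hdir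
    (fun α => hne α α.2) (fun α => hcpt α α.2) (fun α => (hcpt α α.2).isClosed)
  refine ⟨x, ?_⟩
  rw [cut_of_ne_zero u one_ne_zero]
  show 1 ≤ u x
  refine le_of_forall_lt_imp_le_of_dense fun α hα => ?_
  have hx' := mem_iInter.1 hx ⟨max α (1 / 2), by positivity, max_lt hα (by norm_num)⟩
  rw [cut_of_ne_zero u (by positivity)] at hx'
  exact (le_max_left _ _).trans hx'

lemma fuscg_of_isCompact_cut (h01 : ∀ x, u x ∈ Icc (0:ℝ) 1) (hne : (cut u 1).Nonempty)
    (hcpt : ∀ α ∈ Ioc (0:ℝ) 1, IsCompact (cut u α)) : FUSCG u := by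
  refine ⟨⟨h01, fun α hα => ?_⟩, hcpt⟩
  rcases hα.1.eq_or_lt with rfl | hα0
  · rw [cut, if_pos rfl]
    obtain ⟨x, hx⟩ := hne
    rw [cut_of_ne_zero u one_ne_zero] at hx
    exact ⟨⟨x, subset_closure (show 0 < u x from zero_lt_one.trans_le hx)⟩, isClosed_closure⟩
  · exact ⟨hne.mono (cut_subset_cut hα0 hα.2), (hcpt α ⟨hα0, hα.2⟩).isClosed⟩

lemma mk_zero_mem_endo (hu : ∀ x, 0 ≤ u x) (x : X) : (x, (0:ℝ)) ∈ endo u :=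
  ⟨⟨le_rfl, zero_le_one⟩, hu x⟩

lemma hausdorffEDist_endo_ne_top (hu : ∀ x, 0 ≤ u x) (hv : ∀ x, 0 ≤ v x) :
    hausdorffEDist (endo u) (endo v) ≠ ⊤ := by
  have key : ∀ w : X → ℝ, ∀ p ∈ endo w, edist p (p.1, 0) ≤ 1 := fun w p hp => by
    rw [Prod.edist_eq, edist_self, edist_dist, Real.dist_eq, sub_zero, abs_of_nonneg hp.1.1]
    exact max_le (by simp) (ENNReal.ofReal_le_one.2 hp.1.2)
  refine ne_top_of_le_ne_top ENNReal.one_ne_top (hausdorffEDist_le_of_mem_edist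
    (fun p hp => ⟨_, mk_zero_mem_endo hv p.1, key u p hp⟩)
    (fun p hp => ⟨_, mk_zero_mem_endo hu p.1, key v p hp⟩))

lemma ofReal_Hend (hu : ∀ x, 0 ≤ u x) (hv : ∀ x, 0 ≤ v x) :
    ENNReal.ofReal (Hend u v) = hausdorffEDist (endo u) (endo v) :=
  ENNReal.ofReal_toReal (hausdorffEDist_endo_ne_top hu hv)

/-- `(y, min r t')` is as close to `(x, r)` as `(y, t')` is to `(x, t)`. -/
lemma infEDist_endo_le {x : X} {r t : ℝ} (hr : 0 ≤ r) (hrt : r ≤ t) :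
    infEDist (x, r) (endo u) ≤ infEDist (x, t) (endo u) := by
  refine le_infEDist.2 fun q hq => ?_
  have hmem : (q.1, min r q.2) ∈ endo u :=
    ⟨⟨le_min hr hq.1.1, (min_le_right _ _).trans hq.1.2⟩, (min_le_right _ _).trans hq.2⟩
  refine (infEDist_le_edist_of_mem hmem).trans ?_
  rw [edist_dist, edist_dist, Prod.dist_eq, Prod.dist_eq]
  refine ENNReal.ofReal_le_ofReal (max_le_max le_rfl ?_)
  rw [Real.dist_eq, Real.dist_eq]
  dsimp only
  rcases le_total r q.2 with h | h
  · simp [min_eq_left h]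
  · rw [min_eq_right h, abs_of_nonneg (sub_nonneg.2 h), abs_of_nonneg (by linarith)]
    linarith

lemma cut_subset_thickening_cut (hu : ∀ x, 0 ≤ u x) (hv : ∀ x, 0 ≤ v x) {α δ : ℝ}
    (h : Hend u v < δ) (hδα : δ < α) (hα1 : α ≤ 1) :
    cut u α ⊆ thickening δ (cut v (α - δ)) := by
  intro x hx
  have hα0 : 0 < α := (hausdorffDist_nonneg.trans_lt h).trans hδα
  obtain ⟨⟨y, t⟩, hyt, hd⟩ := exists_dist_lt_of_hausdorffDist_lt
    ((mem_cut_iff_mem_endo ⟨hα0, hα1⟩).1 hx) h (hausdorffEDist_endo_ne_top hu hv)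
  rw [Prod.dist_eq, max_lt_iff, Real.dist_eq, abs_lt] at hd
  refine mem_thickening_iff.2 ⟨y, ?_, hd.1⟩
  rw [cut_of_ne_zero v (sub_pos.2 hδα).ne']
  exact (show α - δ ≤ t by linarith [hd.2.1]).trans hyt.2

lemma exists_endo_eq {E : Set (X × ℝ)} (hE : IsClosed E) (hsub : E ⊆ univ ×ˢ Icc 0 1)
    (hzero : ∀ x, (x, (0:ℝ)) ∈ E)
    (hdown : ∀ x r t, 0 ≤ r → r ≤ t → (x, t) ∈ E → (x, r) ∈ E) :
    ∃ v : X → ℝ, (∀ x, v x ∈ Icc (0:ℝ) 1) ∧ endo v = E := by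
  have hbdd : ∀ x, BddAbove {t | (x, t) ∈ E} := fun x => ⟨1, fun t ht => (hsub ht).2.2⟩
  have hmem : ∀ x, (x, sSup {t | (x, t) ∈ E}) ∈ E := fun x =>
    (hE.preimage (Continuous.prodMk_right x)).csSup_mem ⟨0, hzero x⟩ (hbdd x)
  refine ⟨fun x => sSup {t | (x, t) ∈ E}, fun x => (hsub (hmem x)).2, ?_⟩
  ext ⟨x, t⟩
  exact ⟨fun h => hdown x t _ h.1.1 h.2 (hmem x), fun h => ⟨(hsub h).2, le_csSup (hbdd x) h⟩⟩

/-- Endographs are the closed sets in `X × [0,1]` containing `X × {0}` whose sections are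
downward closed; phrased through `infEDist`, each of these conditions is closed for the
Hausdorff distance. -/
lemma isClosed_setOf_eq_endo :
    IsClosed {F : Closeds (X × ℝ) | ∃ v : X → ℝ, (∀ x, v x ∈ Icc (0:ℝ) 1) ∧ endo v = F} := by
  have hcont : ∀ p : X × ℝ, Continuous fun F : Closeds (X × ℝ) => infEDist p F := fun p =>
    Closeds.continuous_infEDist.comp (Continuous.prodMk_right p)
  have hchar : {F : Closeds (X × ℝ) | ∃ v : X → ℝ, (∀ x, v x ∈ Icc (0:ℝ) 1) ∧ endo v = F} =
      {F : Closeds (X × ℝ) | (F : Set (X × ℝ)) ⊆ univ ×ˢ Icc 0 1} ∩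
        {F | ∀ x : X, infEDist (x, (0:ℝ)) F = 0} ∩
        {F | ∀ (x : X) (r t : ℝ), 0 ≤ r → r ≤ t → infEDist (x, r) F ≤ infEDist (x, t) F} := by
    ext F
    constructor
    · rintro ⟨v, hv, hvF⟩
      simp only [mem_inter_iff, mem_ofPred_eq, ← hvF]
      exact ⟨⟨fun p hp => ⟨trivial, hp.1⟩,
        fun x => infEDist_zero_of_mem (mk_zero_mem_endo (fun y => (hv y).1) x)⟩,
        fun x r t => infEDist_endo_le⟩
    · rintro ⟨⟨hsub, hzero⟩, hdown⟩
      have hmem : ∀ p, p ∈ (F : Set (X × ℝ)) ↔ infEDist p F = 0 := fun p =>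
        mem_iff_infEDist_zero_of_closed F.isClosed
      refine exists_endo_eq F.isClosed hsub (fun x => (hmem _).2 (hzero x))
        fun x r t hr hrt hxt => (hmem _).2 (le_antisymm ?_ zero_le)
      exact (hdown x r t hr hrt).trans ((hmem _).1 hxt).le
  rw [hchar]
  simp only [ofPred_forall]
  refine ((Closeds.isClosed_subsets_of_isClosed (isClosed_univ.prod isClosed_Icc)).inter
    (isClosed_iInter fun x => isClosed_eq (hcont _) continuous_const)).inter
    (isClosed_iInter fun x => isClosed_iInter fun r => isClosed_iInter fun t =>
      isClosed_iInter fun _ => isClosed_iInter fun _ => isClosed_le (hcont _) (hcont _))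

lemma totallyBounded_of_forall_subset_thickening {Y : Type*} [PseudoMetricSpace Y] {s : Set Y}
    (h : ∀ δ > 0, ∃ K, IsCompact K ∧ s ⊆ thickening δ K) : TotallyBounded s := by
  refine Metric.totallyBounded_iff.2 fun ε hε => ?_
  obtain ⟨K, hK, hsK⟩ := h (ε / 2) (half_pos hε)
  obtain ⟨t, -, ht, hKt⟩ := finite_cover_balls_of_compact hK (half_pos hε)
  refine ⟨t, ht, fun x hx => ?_⟩
  obtain ⟨z, hz, hxz⟩ := mem_thickening_iff.1 (hsK hx)
  obtain ⟨y, hy, hzy⟩ := mem_iUnion₂.1 (hKt hz)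
  exact mem_iUnion₂.2 ⟨y, hy, mem_ball.2 (by linarith [dist_triangle x z y, mem_ball.1 hzy])⟩

lemma isCompact_cut_of_tendsto_Hend [CompleteSpace X] {s : ℕ → X → ℝ} (hs : ∀ n, FUSCG (s n))
    (hv : ∀ x, 0 ≤ v x) (hlim : Tendsto (fun n => Hend v (s n)) atTop (𝓝 0)) {α : ℝ}
    (hα : α ∈ Ioc (0:ℝ) 1) (hcl : IsClosed (cut v α)) : IsCompact (cut v α) := by
  refine (totallyBounded_of_forall_subset_thickening fun δ hδ => ?_).isCompact_of_isClosed hcl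
  set η := min δ (α / 2)
  have hη : 0 < η := lt_min hδ (half_pos hα.1)
  have hηα : η ≤ α / 2 := min_le_right _ _
  obtain ⟨N, hN⟩ := (hlim.eventually (eventually_lt_nhds hη)).exists
  refine ⟨cut (s N) (α - η), (hs N).2 _ ⟨by linarith, by linarith [hα.2]⟩, ?_⟩
  exact (cut_subset_thickening_cut hv (fun x => ((hs N).1.1 x).1) hN (by linarith) hα.2).trans
    (thickening_mono (min_le_left _ _) _)

lemma exists_tendsto_Hend_of_cauchy [CompleteSpace X] {s : ℕ → X → ℝ} (hs : ∀ n, FUSC (s n))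
    (hcauchy : ∀ ε > (0:ℝ), ∃ N : ℕ, ∀ m ≥ N, ∀ n ≥ N, Hend (s m) (s n) < ε) :
    ∃ v : X → ℝ, (∀ x, v x ∈ Icc (0:ℝ) 1) ∧ IsClosed (endo v) ∧
      Tendsto (fun n => Hend (s n) v) atTop (𝓝 0) := by
  have hs0 : ∀ n x, 0 ≤ s n x := fun n x => ((hs n).1 x).1
  let C : ℕ → Closeds (X × ℝ) := fun n => ⟨endo (s n), (hs n).isClosed_endo⟩
  have hC : CauchySeq C := by
    refine EMetric.cauchySeq_iff.2 fun ε hε => ?_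
    obtain ⟨δ, -, hδ, hδε⟩ := ENNReal.lt_iff_exists_real_btwn.1 hε
    obtain ⟨N, hN⟩ := hcauchy δ (ENNReal.ofReal_pos.1 hδ)
    refine ⟨N, fun m hm n hn => ?_⟩
    show hausdorffEDist (endo (s m)) (endo (s n)) < ε
    rw [← ofReal_Hend (hs0 m) (hs0 n)]
    exact ((ENNReal.ofReal_lt_ofReal_iff (ENNReal.ofReal_pos.1 hδ)).2 (hN m hm n hn)).trans hδε
  obtain ⟨L, hL⟩ := cauchySeq_tendsto_of_complete hC
  obtain ⟨v, hv, hvL⟩ := isClosed_setOf_eq_endo.mem_of_tendsto hL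
    (Eventually.of_forall fun n => ⟨s n, (hs n).1, rfl⟩)
  refine ⟨v, hv, hvL ▸ L.isClosed, ?_⟩
  have hedist :=
    (ENNReal.tendsto_toReal ENNReal.zero_ne_top).comp (tendsto_iff_edist_tendsto_0.1 hL)
  simpa [C, Function.comp_def, Closeds.edist_eq, Hend, hausdorffDist, hvL] using hedist

lemma fuscg_of_tendsto_Hend [CompleteSpace X] {s : ℕ → X → ℝ} (hs : ∀ n, FUSCG (s n))
    (hv : ∀ x, v x ∈ Icc (0:ℝ) 1) (hvcl : IsClosed (endo v))
    (hlim : Tendsto (fun n => Hend (s n) v) atTop (𝓝 0)) : FUSCG v := by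
  have hv0 : ∀ x, 0 ≤ v x := fun x => (hv x).1
  have hs0 : ∀ n x, 0 ≤ s n x := fun n x => ((hs n).1.1 x).1
  have hcpt : ∀ α ∈ Ioc (0:ℝ) 1, IsCompact (cut v α) := fun α hα =>
    isCompact_cut_of_tendsto_Hend hs hv0 (by simpa only [Hend, hausdorffDist_comm] using hlim) hα
      (isClosed_cut_of_isClosed_endo hvcl hα)
  have hne : ∀ α ∈ Ioo (0:ℝ) 1, (cut v α).Nonempty := by
    intro α hα
    obtain ⟨N, hN⟩ := (hlim.eventually (eventually_lt_nhds (sub_pos.2 hα.2))).exists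
    obtain ⟨x, hx⟩ := ((hs N).1.2 1 ⟨zero_le_one, le_rfl⟩).1
    obtain ⟨y, hy, -⟩ := mem_thickening_iff.1
      (cut_subset_thickening_cut (hs0 N) hv0 hN (by linarith [hα.1]) le_rfl hx)
    exact ⟨y, by rwa [sub_sub_cancel] at hy⟩
  exact fuscg_of_isCompact_cut hv (cut_one_nonempty (fun α hα => hcpt α ⟨hα.1, hα.2.le⟩) hne) hcpt

end FuzzySets

section PointIndicator

variable {X : Type*}

noncomputable def pointIndicator (a : X) : X → ℝ := ({a} : Set X).indicator 1

lemma pointIndicator_mem_Icc (a x : X) : pointIndicator a x ∈ Icc (0:ℝ) 1 := by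
  by_cases h : x = a <;> simp [pointIndicator, h]

lemma le_pointIndicator_iff {a x : X} {α : ℝ} (hα : α ∈ Ioc (0:ℝ) 1) :
    α ≤ pointIndicator a x ↔ x = a := by
  by_cases h : x = a <;> simp [pointIndicator, h, hα.2, hα.1]

variable [MetricSpace X] {v : X → ℝ}

lemma cut_pointIndicator (a : X) {α : ℝ} (hα : α ∈ Ioc (0:ℝ) 1) :
    cut (pointIndicator a) α = {a} := by
  rw [cut_of_ne_zero _ hα.1.ne']
  ext x
  exact le_pointIndicator_iff hα

lemma fuscg_pointIndicator (a : X) : FUSCG (pointIndicator a) :=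
  fuscg_of_isCompact_cut (pointIndicator_mem_Icc a)
    (cut_pointIndicator a ⟨one_pos, le_rfl⟩ ▸ singleton_nonempty a)
    fun _ hα => cut_pointIndicator a hα ▸ isCompact_singleton

lemma Hend_pointIndicator_le (a b : X) :
    Hend (pointIndicator a) (pointIndicator b) ≤ dist a b := by
  have key : ∀ a b : X, ∀ p ∈ endo (pointIndicator a),
      ∃ q ∈ endo (pointIndicator b), dist p q ≤ dist a b := by
    rintro a b ⟨x, t⟩ hp
    by_cases hx : x = a
    · subst hx
      refine ⟨(b, t), ⟨hp.1, ?_⟩, by simp [Prod.dist_eq]⟩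
      simpa [pointIndicator] using hp.1.2
    · have ht : t = 0 := le_antisymm (by simpa [pointIndicator, hx] using hp.2) hp.1.1
      exact ⟨(x, t), ht ▸ mk_zero_mem_endo (fun y => (pointIndicator_mem_Icc b y).1) x, by simp⟩
  refine hausdorffDist_le_of_mem_dist dist_nonneg (key a b) fun q hq => ?_
  simpa only [dist_comm b a] using key b a q hq

lemma dist_lt_of_Hend_pointIndicator_lt (hv : ∀ x, 0 ≤ v x) {a y : X} (hy : 1 ≤ v y) {δ : ℝ}
    (h : Hend (pointIndicator a) v < δ) (hδ : δ ≤ 1) : dist y a < δ := by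
  rw [Hend, hausdorffDist_comm] at h
  have hy1 : (y, (1:ℝ)) ∈ endo v := ⟨⟨zero_le_one, le_rfl⟩, hy⟩
  obtain ⟨⟨z, t⟩, hzt, hd⟩ := exists_dist_lt_of_hausdorffDist_lt hy1 h
    (hausdorffEDist_endo_ne_top hv fun x => (pointIndicator_mem_Icc a x).1)
  rw [Prod.dist_eq, max_lt_iff, Real.dist_eq, abs_lt] at hd
  have hz : z = a := (le_pointIndicator_iff ⟨by linarith [hd.2.2], hzt.1.2⟩).1 hzt.2
  exact hz ▸ hd.1

lemma exists_tendsto_of_tendsto_Hend_pointIndicator (hv : FUSC v) {x : ℕ → X}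
    (hlim : Tendsto (fun n => Hend (pointIndicator (x n)) v) atTop (𝓝 0)) :
    ∃ y, Tendsto x atTop (𝓝 y) := by
  obtain ⟨y, hy⟩ := (hv.2 1 ⟨zero_le_one, le_rfl⟩).1
  rw [cut_of_ne_zero v one_ne_zero] at hy
  refine ⟨y, Metric.tendsto_atTop.2 fun ε hε => ?_⟩
  obtain ⟨N, hN⟩ := eventually_atTop.1 (hlim.eventually (eventually_lt_nhds (lt_min hε one_pos)))
  refine ⟨N, fun n hn => ?_⟩
  rw [dist_comm]
  exact (dist_lt_of_Hend_pointIndicator_lt (fun z => (hv.1 z).1) hy (hN n hn)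
    (min_le_right _ _)).trans_le (min_le_left _ _)

end PointIndicator

theorem complete_iff_FUSCG_Hend_complete
    {X : Type*} [MetricSpace X] :
    CompleteSpace X ↔
      ∀ s : ℕ → X → ℝ, (∀ n, FUSCG (s n)) →
        (∀ ε > (0:ℝ), ∃ N : ℕ, ∀ m ≥ N, ∀ n ≥ N, Hend (s m) (s n) < ε) →
        ∃ v : X → ℝ, FUSCG v ∧ Tendsto (fun n => Hend (s n) v) atTop (𝓝 0) := by
  refine ⟨fun _ s hs hcauchy => ?_, fun H => Metric.complete_of_cauchySeq_tendsto fun x hx => ?_⟩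
  · obtain ⟨v, hv, hvcl, hlim⟩ := exists_tendsto_Hend_of_cauchy (fun n => (hs n).1) hcauchy
    exact ⟨v, fuscg_of_tendsto_Hend hs hv hvcl hlim, hlim⟩
  · have hcauchy : ∀ ε > (0:ℝ), ∃ N : ℕ, ∀ m ≥ N, ∀ n ≥ N,
        Hend (pointIndicator (x m)) (pointIndicator (x n)) < ε := fun ε hε =>
      (Metric.cauchySeq_iff.1 hx ε hε).imp fun N hN m hm n hn =>
        (Hend_pointIndicator_le _ _).trans_lt (hN m hm n hn)
    obtain ⟨v, hv, hlim⟩ := H _ (fun n => fuscg_pointIndicator (x n)) hcauchy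
    exact exists_tendsto_of_tendsto_Hend_pointIndicator hv.1 hlim
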